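/- Let X and Y be Hermitian matrices (of possibly different finite dimensions) with tr X = tr Y = 1 and ‖X‖₁ ≥ ‖Y‖₁. Then there exists a completely positive trace-preserving linear map Λ such that Λ(X) = Y. -/

import Mathlib

open scoped BigOperators ComplexOrder

noncomputable section

/-- Bipartite matrices on `ℂ^{IA} ⊗ ℂ^{IB}`, indexed by pairs. -/
abbrev BMat (IA IB : Type) : Type := Matrix (IA × IB) (IA × IB) ℂ

/-- Partial transpose on the `B` system: `(X^{T_B})_{(i,j),(k,l)} = X_{(i,l),(k,j)}`. -/
def ptB {IA IB : Type} (X : BMat IA IB) : BMat IA IB :=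
  fun p q => X (p.1, q.2) (q.1, p.2)

/-- Trace norm `‖X‖₁ = tr √(X† X)`. -/
noncomputable def traceNorm {n : Type} [Fintype n] [DecidableEq n]
    (X : Matrix n n ℂ) : ℝ :=
  (((Matrix.posSemidef_conjTranspose_mul_self X).1.eigenvectorUnitary.1 *
      Matrix.diagonal (((↑) : ℝ → ℂ) ∘ (√·) ∘ (Matrix.posSemidef_conjTranspose_mul_self X).1.eigenvalues) *
      (star (Matrix.posSemidef_conjTranspose_mul_self X).1.eigenvectorUnitary : Matrix n n ℂ)).trace).re

/-- Operator norm (largest singular value). -/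
noncomputable def opNorm {n : Type} [Fintype n] [DecidableEq n] (X : Matrix n n ℂ) : ℝ :=
  ‖Matrix.toEuclideanCLM (𝕜 := ℂ) X‖

/-- Logarithmic negativity `E_N(X) = log₂ ‖X^{T_B}‖₁`. -/
noncomputable def EN {IA IB : Type} [Fintype IA] [Fintype IB] [DecidableEq IA] [DecidableEq IB]
    (X : BMat IA IB) : ℝ :=
  Real.logb 2 (traceNorm (ptB X))

/-- The extension `id_k ⊗ f` of a map on matrices, acting blockwise. -/
def extMap {I J : Type} (f : Matrix I I ℂ → Matrix J J ℂ) (k : ℕ)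
    (M : Matrix (Fin k × I) (Fin k × I) ℂ) : Matrix (Fin k × J) (Fin k × J) ℂ :=
  fun p q => f (fun i i' => M (p.1, i) (q.1, i')) p.2 q.2

/-- A map on matrices is completely positive if all its extensions `id_k ⊗ f`
map positive semidefinite matrices to positive semidefinite matrices. -/
def CompletelyPositive {I J : Type} [Fintype I] [Fintype J]
    (f : Matrix I I ℂ → Matrix J J ℂ) : Prop :=
  ∀ (k : ℕ) (M : Matrix (Fin k × I) (Fin k × I) ℂ), M.PosSemidef → (extMap f k M).PosSemidef

/-- A PPTq operation: a Hermitian-preserving, trace-preserving linear map `N`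
such that `T_{B'} ∘ N ∘ T_B` is completely positive. -/
def IsPPTq {IA IB JA JB : Type} [Fintype IA] [Fintype IB] [Fintype JA] [Fintype JB]
    (N : BMat IA IB →ₗ[ℂ] BMat JA JB) : Prop :=
  (∀ X : BMat IA IB, X.IsHermitian → (N X).IsHermitian) ∧
  (∀ X : BMat IA IB, (N X).trace = X.trace) ∧
  CompletelyPositive (fun X => ptB (N (ptB X)))

/-- A bipartite quasi-state: Hermitian with trace one. -/
def IsQuasiState {IA IB : Type} [Fintype IA] [Fintype IB] (ρ : BMat IA IB) : Prop :=
  ρ.IsHermitian ∧ ρ.trace = 1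

/-- A bipartite quantum state: positive semidefinite with trace one. -/
def IsState {IA IB : Type} [Fintype IA] [Fintype IB] (ρ : BMat IA IB) : Prop :=
  ρ.PosSemidef ∧ ρ.trace = 1

/-- The maximally entangled state `Φ^d = (1/d) ∑_{i,j} |ii⟩⟨jj|`. -/
noncomputable def MES (d : ℕ) : BMat (Fin d) (Fin d) :=
  fun p q => if p.1 = p.2 ∧ q.1 = q.2 then (1 : ℂ) / d else 0

/-- `n`-fold tensor (Kronecker) power, with all `A` factors grouped against all `B` factors. -/
def tensorPow {IA IB : Type} (ρ : BMat IA IB) (n : ℕ) :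
    BMat (Fin n → IA) (Fin n → IB) :=
  fun p q => ∏ i : Fin n, ρ (p.1 i, p.2 i) (q.1 i, q.2 i)

/-- Tensor (Kronecker) product of two bipartite matrices, grouping `A` systems together
and `B` systems together. -/
def tensorMul {IA IB JA JB : Type} (ρ : BMat IA IB) (σ : BMat JA JB) :
    BMat (IA × JA) (IB × JB) :=
  fun p q => ρ (p.1.1, p.2.1) (q.1.1, q.2.1) * σ (p.1.2, p.2.2) (q.1.2, q.2.2)

/-- One-shot exact distillable entanglement under PPTq operations. -/
noncomputable def oneShotDistill {IA IB : Type} [Fintype IA] [Fintype IB]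
    (ρ : BMat IA IB) : ℝ :=
  sSup { x : ℝ | ∃ d : ℕ, 0 < d ∧ x = Real.logb 2 d ∧
    ∃ Λ : BMat IA IB →ₗ[ℂ] BMat (Fin d) (Fin d), IsPPTq Λ ∧ Λ ρ = MES d }

/-- One-shot exact entanglement cost under PPTq operations. -/
noncomputable def oneShotCost {IA IB : Type} [Fintype IA] [Fintype IB]
    (ρ : BMat IA IB) : ℝ :=
  sInf { x : ℝ | ∃ d : ℕ, 0 < d ∧ x = Real.logb 2 d ∧
    ∃ Λ : BMat (Fin d) (Fin d) →ₗ[ℂ] BMat IA IB, IsPPTq Λ ∧ Λ (MES d) = ρ }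

/-- The one-shot distillation error for `n` copies towards `Φ^d`, optimized over PPTq operations. -/
noncomputable def distillErr {IA IB : Type} [Fintype IA] [Fintype IB]
    [DecidableEq IA] [DecidableEq IB] (ρ : BMat IA IB) (n d : ℕ) : ℝ :=
  sInf { e : ℝ | ∃ Λ : BMat (Fin n → IA) (Fin n → IB) →ₗ[ℂ] BMat (Fin d) (Fin d),
    IsPPTq Λ ∧ e = traceNorm (Λ (tensorPow ρ n) - MES d) }

/-- The one-shot dilution error for preparing `n` copies from `Φ^d`, optimized over PPTq operations. -/
noncomputable def costErr {IA IB : Type} [Fintype IA] [Fintype IB]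
    [DecidableEq IA] [DecidableEq IB] (ρ : BMat IA IB) (n d : ℕ) : ℝ :=
  sInf { e : ℝ | ∃ Λ : BMat (Fin d) (Fin d) →ₗ[ℂ] BMat (Fin n → IA) (Fin n → IB),
    IsPPTq Λ ∧ e = traceNorm (tensorPow ρ n - Λ (MES d)) }

/-- Distillable entanglement under PPTq operations (asymptotically vanishing error). -/
noncomputable def EDppt {IA IB : Type} [Fintype IA] [Fintype IB]
    [DecidableEq IA] [DecidableEq IB] (ρ : BMat IA IB) : ℝ :=
  sSup { r : ℝ | Filter.Tendsto (fun n : ℕ => distillErr ρ n (2 ^ ⌊r * n⌋₊))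
    Filter.atTop (nhds 0) }

/-- Entanglement cost under PPTq operations (asymptotically vanishing error). -/
noncomputable def ECppt {IA IB : Type} [Fintype IA] [Fintype IB]
    [DecidableEq IA] [DecidableEq IB] (ρ : BMat IA IB) : ℝ :=
  sInf { r : ℝ | Filter.Tendsto (fun n : ℕ => costErr ρ n (2 ^ ⌈r * n⌉₊))
    Filter.atTop (nhds 0) }

/-- Tempered negativity `N_τ(σ | ρ)`. -/
noncomputable def temperedNeg {IA IB : Type} [Fintype IA] [Fintype IB]
    [DecidableEq IA] [DecidableEq IB] (σ ρ : BMat IA IB) : ℝ :=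
  sSup { t : ℝ | ∃ X : Matrix (IA × IB) (IA × IB) ℂ, X.IsHermitian ∧
    opNorm (ptB X) ≤ 1 ∧ (X * ρ).trace = (opNorm X : ℂ) ∧ (X * σ).trace = (t : ℂ) }

/-- Asymptotic exact conversion rate under PPTq operations. -/
noncomputable def convRate {IA IB JA JB : Type} [Fintype IA] [Fintype IB]
    [Fintype JA] [Fintype JB]
    (ρ : BMat IA IB) (σ : BMat JA JB) : ℝ :=
  sSup { r : ℝ | 0 ≤ r ∧ ∀ᶠ n : ℕ in Filter.atTop,
    ∃ Λ : BMat (Fin n → IA) (Fin n → IB) →ₗ[ℂ]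
          BMat (Fin ⌊r * n⌋₊ → JA) (Fin ⌊r * n⌋₊ → JB),
      IsPPTq Λ ∧ Λ (tensorPow ρ n) = tensorPow σ ⌊r * n⌋₊ }

/-!
Measure and prepare. Measure `X` with the spectral projections `E` onto its nonnegative and `F`
onto its negative eigenspace: `tr (E X) = a`, `tr (F X) = -b` with `a - b = tr X = 1` and
`a + b = ‖X‖₁`. Split `Y = P - N` into positive and negative parts, `tr P = c`, `tr N = d`, so
`c - d = 1` and `c + d = ‖Y‖₁ ≤ a + b`, whence `d ≤ b`. Then `Y = a A - b B` for the states
`A = P / c` and `B = (N + (b - d) A) / b` (if `b = 0` then `N = 0`, and `B = A` will do), and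
`M ↦ tr (E M) A + tr (F M) B` is the channel.
-/

open Matrix
open scoped Kronecker MatrixOrder

lemma extMap_apply {I J : Type} (f : Matrix I I ℂ → Matrix J J ℂ) (k : ℕ)
    (M : Matrix (Fin k × I) (Fin k × I) ℂ) (p q : Fin k × J) :
    extMap f k M p q = f (M.submatrix (Prod.mk p.1) (Prod.mk q.1)) p.2 q.2 := rfl

namespace CompletelyPositive

variable {I J K : Type} [Fintype I] [Fintype J] [Fintype K]

lemma comp {g : Matrix J J ℂ → Matrix K K ℂ} {f : Matrix I I ℂ → Matrix J J ℂ}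
    (hg : CompletelyPositive g) (hf : CompletelyPositive f) : CompletelyPositive (g ∘ f) :=
  fun k M hM => hg k _ (hf k M hM)

lemma sum {ι : Type} (s : Finset ι) {f : ι → Matrix I I ℂ → Matrix J J ℂ}
    (hf : ∀ i ∈ s, CompletelyPositive (f i)) :
    CompletelyPositive (fun M => ∑ i ∈ s, f i M) := by
  intro k M hM
  have hext : extMap (fun M => ∑ i ∈ s, f i M) k M = ∑ i ∈ s, extMap (f i) k M := by
    ext p q
    simp [extMap_apply, Matrix.sum_apply]
  rw [hext]
  exact posSemidef_sum s fun i hi => hf i hi k M hM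

end CompletelyPositive

section CompletelyPositive

variable {I J : Type} [Fintype I] [Fintype J]

lemma completelyPositive_mul_mul_conjTranspose [DecidableEq I] (A : Matrix J I ℂ) :
    CompletelyPositive (fun M : Matrix I I ℂ => A * M * Aᴴ) := by
  intro k M hM
  have hext : extMap (fun M : Matrix I I ℂ => A * M * Aᴴ) k M =
      ((1 : Matrix (Fin k) (Fin k) ℂ) ⊗ₖ A) * M * ((1 : Matrix (Fin k) (Fin k) ℂ) ⊗ₖ A)ᴴ := by
    ext p q
    simp [extMap_apply, Matrix.mul_apply, Fintype.sum_prod_type, Matrix.one_apply,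
      Finset.sum_mul, apply_ite (starRingEnd ℂ), mul_ite]
  rw [hext]
  exact hM.mul_mul_conjTranspose_same _

lemma completelyPositive_trace_smul {ρ : Matrix J J ℂ} (hρ : ρ.PosSemidef) :
    CompletelyPositive (fun M : Matrix I I ℂ => M.trace • ρ) := by
  intro k M hM
  -- the left factor is the partial trace of `M` over `I`
  have hext : extMap (fun M : Matrix I I ℂ => M.trace • ρ) k M =
      (∑ i, M.submatrix (fun a => (a, i)) (fun a => (a, i))) ⊗ₖ ρ := by
    ext p q
    simp [extMap_apply, Matrix.trace, Matrix.sum_apply, Finset.sum_mul]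
  rw [hext]
  exact (posSemidef_sum _ fun i _ => hM.submatrix _).kronecker hρ

lemma completelyPositive_trace_mul_smul [DecidableEq I] {E : Matrix I I ℂ} {ρ : Matrix J J ℂ}
    (hE : E.PosSemidef) (hρ : ρ.PosSemidef) :
    CompletelyPositive (fun M : Matrix I I ℂ => (E * M).trace • ρ) := by
  obtain ⟨S, rfl⟩ := CStarAlgebra.nonneg_iff_eq_star_mul_self.mp hE.nonneg
  have hcomp : (fun M : Matrix I I ℂ => (star S * S * M).trace • ρ) =
      (fun M : Matrix I I ℂ => M.trace • ρ) ∘ (fun M => S * M * Sᴴ) := by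
    ext1 M
    rw [Function.comp_apply, Matrix.trace_mul_cycle S, Matrix.star_eq_conjTranspose]
  rw [hcomp]
  exact (completelyPositive_trace_smul hρ).comp (completelyPositive_mul_mul_conjTranspose S)

end CompletelyPositive

section MeasurePrepare

variable {ι I J : Type} [Fintype ι] [Fintype I]

def measurePrepare (E : ι → Matrix I I ℂ) (ρ : ι → Matrix J J ℂ) :
    Matrix I I ℂ →ₗ[ℂ] Matrix J J ℂ :=
  ∑ i, (traceLinearMap I ℂ ℂ ∘ₗ LinearMap.mulLeft ℂ (E i)).smulRight (ρ i)

lemma measurePrepare_apply (E : ι → Matrix I I ℂ) (ρ : ι → Matrix J J ℂ) (M : Matrix I I ℂ) :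
    measurePrepare E ρ M = ∑ i, (E i * M).trace • ρ i := by
  simp [measurePrepare]

lemma completelyPositive_measurePrepare [Fintype J] [DecidableEq I] {E : ι → Matrix I I ℂ}
    {ρ : ι → Matrix J J ℂ} (hE : ∀ i, (E i).PosSemidef) (hρ : ∀ i, (ρ i).PosSemidef) :
    CompletelyPositive (fun M => measurePrepare E ρ M) := by
  simp only [measurePrepare_apply]
  exact CompletelyPositive.sum _ fun i _ => completelyPositive_trace_mul_smul (hE i) (hρ i)

lemma trace_measurePrepare [Fintype J] [DecidableEq I] {E : ι → Matrix I I ℂ}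
    {ρ : ι → Matrix J J ℂ} (hE : ∑ i, E i = 1) (hρ : ∀ i, (ρ i).trace = 1) (M : Matrix I I ℂ) :
    (measurePrepare E ρ M).trace = M.trace :=
  calc (measurePrepare E ρ M).trace = ∑ i, (E i * M).trace := by
        simp [measurePrepare_apply, trace_sum, hρ]
    _ = ((∑ i, E i) * M).trace := by rw [Finset.sum_mul, trace_sum]
    _ = M.trace := by rw [hE, one_mul]

end MeasurePrepare

section Spectral

variable {n : Type} [Fintype n] [DecidableEq n]

lemma traceNorm_eq_re_trace_cfc_sqrt (X : Matrix n n ℂ) :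
    traceNorm X = (cfc Real.sqrt (Xᴴ * X)).trace.re := by
  rw [(posSemidef_conjTranspose_mul_self X).1.cfc_eq, traceNorm]
  simp [IsHermitian.cfc, Unitary.conjStarAlgAut_apply]

lemma Matrix.IsHermitian.ofReal_traceNorm {X : Matrix n n ℂ} (hX : X.IsHermitian) :
    (traceNorm X : ℂ) = (cfc (fun x : ℝ => |x|) X).trace := by
  have hsqrt : cfc Real.sqrt (Xᴴ * X) = cfc (fun x : ℝ => |x|) X := by
    rw [hX.eq, ← pow_two, ← cfc_pow_id (R := ℝ) X 2 hX.isSelfAdjoint,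
      ← cfc_comp Real.sqrt (· ^ 2) X hX.isSelfAdjoint]
    exact cfc_congr fun x _ => Real.sqrt_sq_eq_abs x
  have habs : (cfc (fun x : ℝ => |x|) X).IsHermitian := cfc_predicate _ X
  rw [traceNorm_eq_re_trace_cfc_sqrt, hsqrt, habs.trace_eq_sum_eigenvalues]
  simp

lemma Matrix.IsHermitian.exists_jordan_decomposition {Y : Matrix n n ℂ} (hY : Y.IsHermitian) :
    ∃ P N : Matrix n n ℂ, P.PosSemidef ∧ N.PosSemidef ∧ Y = P - N ∧
      P.trace + N.trace = traceNorm Y := by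
  refine ⟨cfc (fun x : ℝ => x⁺) Y, cfc (fun x : ℝ => x⁻) Y,
    (cfc_nonneg fun x _ => posPart_nonneg x).posSemidef,
    (cfc_nonneg fun x _ => negPart_nonneg x).posSemidef, ?_, ?_⟩
  · rw [← cfc_sub .., cfc_congr fun x _ => posPart_sub_negPart x, cfc_id' ℝ Y]
  · rw [← trace_add, ← cfc_add .., hY.ofReal_traceNorm]
    exact congrArg _ (cfc_congr fun x _ => posPart_add_negPart x)

lemma Matrix.IsHermitian.exists_effects_trace_sub_eq_traceNorm {X : Matrix n n ℂ}
    (hX : X.IsHermitian) :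
    ∃ E F : Matrix n n ℂ, E.PosSemidef ∧ F.PosSemidef ∧ E + F = 1 ∧
      (E * X).trace - (F * X).trace = traceNorm X := by
  set g : ℝ → ℝ := fun x => if 0 ≤ x then 1 else 0
  -- `g` is discontinuous, but every function is continuous on the finite spectrum of a matrix
  have hg : ContinuousOn g (spectrum ℝ X) := X.finite_real_spectrum.continuousOn g
  have habs : cfc (fun x : ℝ => |x|) X =
      cfc (fun x => g x - (1 - g x)) X * cfc (id : ℝ → ℝ) X := by
    rw [← cfc_mul ..]
    refine cfc_congr fun x _ => ?_
    rcases le_or_gt 0 x with hx | hx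
    · simp [g, hx, abs_of_nonneg hx]
    · simp [g, hx.not_ge, abs_of_neg hx]
  refine ⟨cfc g X, cfc (fun x => 1 - g x) X, (cfc_nonneg fun x _ => ?_).posSemidef,
    (cfc_nonneg fun x _ => ?_).posSemidef, ?_, ?_⟩
  · simp only [g]; split_ifs <;> norm_num
  · simp only [g]; split_ifs <;> norm_num
  · rw [← cfc_add .., ← cfc_one ℝ X]
    exact cfc_congr fun x _ => add_sub_cancel _ _
  · rw [hX.ofReal_traceNorm, habs, cfc_id ℝ X, cfc_sub (a := X) (f := g) (g := fun x => 1 - g x),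
      sub_mul, trace_sub]

end Spectral

lemma exists_states_smul_sub_smul {n : Type} [Fintype n] {P N : Matrix n n ℂ}
    (hP : P.PosSemidef) (hN : N.PosSemidef) {a b c d : ℝ} (hPc : P.trace = c)
    (hNd : N.trace = d) (hab : 0 < a - b) (hdb : d ≤ b) (habcd : a - b = c - d) :
    ∃ A B : Matrix n n ℂ, A.PosSemidef ∧ A.trace = 1 ∧ B.PosSemidef ∧ B.trace = 1 ∧
      (a : ℂ) • A - (b : ℂ) • B = P - N := by
  have hd : 0 ≤ d := by simpa [hNd] using hN.trace_nonneg
  have hc : 0 < c := by linarith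
  have hA : (((c⁻¹ : ℝ) : ℂ) • P).PosSemidef :=
    hP.smul (Complex.zero_le_real.mpr (inv_nonneg.mpr hc.le))
  have hAt : (((c⁻¹ : ℝ) : ℂ) • P).trace = 1 := by
    rw [trace_smul, hPc, smul_eq_mul, ← Complex.ofReal_mul, inv_mul_cancel₀ hc.ne',
      Complex.ofReal_one]
  rcases (hd.trans hdb).eq_or_lt with hb | hb
  · have hN0 : N = 0 := hN.trace_eq_zero_iff.mp (by rw [hNd, le_antisymm (hb ▸ hdb) hd]; simp)
    refine ⟨_, _, hA, hAt, hA, hAt, ?_⟩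
    rw [← hb, hN0, Complex.ofReal_zero, zero_smul, sub_zero, sub_zero, smul_smul,
      ← Complex.ofReal_mul, show a = c by linarith, mul_inv_cancel₀ hc.ne', Complex.ofReal_one,
      one_smul]
  · refine ⟨_, ((b⁻¹ : ℝ) : ℂ) • (N + (((b - d) / c : ℝ) : ℂ) • P), hA, hAt, ?_, ?_, ?_⟩
    · exact (hN.add (hP.smul (Complex.zero_le_real.mpr (div_nonneg (by linarith) hc.le)))).smul
        (Complex.zero_le_real.mpr (inv_nonneg.mpr hb.le))
    · rw [trace_smul, trace_add, trace_smul, hPc, hNd, smul_eq_mul, smul_eq_mul]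
      push_cast
      field_simp
      ring
    · have habcd' : (a : ℂ) - b = c - d := by exact_mod_cast habcd
      ext i j
      simp only [Matrix.sub_apply, Matrix.smul_apply, Matrix.add_apply, smul_eq_mul]
      push_cast
      field_simp
      linear_combination P i j * habcd'

/-- For Hermitian matrices `X`, `Y` of trace one with
`‖X‖₁ ≥ ‖Y‖₁`, there exists a completely positive trace-preserving linear map `Λ`
with `Λ X = Y`. -/
theorem exists_CPTP_map_of_traceNorm_le {m k : ℕ}
    (X : Matrix (Fin m) (Fin m) ℂ) (Y : Matrix (Fin k) (Fin k) ℂ)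
    (hX : X.IsHermitian) (hY : Y.IsHermitian)
    (hXt : X.trace = 1) (hYt : Y.trace = 1)
    (h : traceNorm Y ≤ traceNorm X) :
    ∃ Λ : Matrix (Fin m) (Fin m) ℂ →ₗ[ℂ] Matrix (Fin k) (Fin k) ℂ,
      CompletelyPositive (fun M => Λ M) ∧ (∀ M, (Λ M).trace = M.trace) ∧ Λ X = Y := by
  obtain ⟨E, F, hE, hF, hEF, hEFX⟩ := hX.exists_effects_trace_sub_eq_traceNorm
  obtain ⟨P, N, hP, hN, hPN, hPNt⟩ := hY.exists_jordan_decomposition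
  have hEFt : (E * X).trace + (F * X).trace = 1 := by
    rw [← trace_add, ← add_mul, hEF, one_mul, hXt]
  have hPNt' : P.trace - N.trace = 1 := by rw [← trace_sub, ← hPN, hYt]
  have hEX : (E * X).trace = ((traceNorm X + 1) / 2 : ℝ) := by
    push_cast; linear_combination (hEFt + hEFX) / 2
  have hFX : (F * X).trace = -((traceNorm X - 1) / 2 : ℝ) := by
    push_cast; linear_combination (hEFt - hEFX) / 2
  obtain ⟨A, B, hA, hAt, hB, hBt, hAB⟩ := exists_states_smul_sub_smul hP hN
    (a := (traceNorm X + 1) / 2) (b := (traceNorm X - 1) / 2)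
    (c := (traceNorm Y + 1) / 2) (d := (traceNorm Y - 1) / 2)
    (by push_cast; linear_combination (hPNt + hPNt') / 2)
    (by push_cast; linear_combination (hPNt - hPNt') / 2) (by linarith) (by linarith) (by ring)
  refine ⟨measurePrepare ![E, F] ![A, B], completelyPositive_measurePrepare ?_ ?_,
    trace_measurePrepare (by simp [hEF]) ?_, ?_⟩
  · simp [Fin.forall_fin_two, hE, hF]
  · simp [Fin.forall_fin_two, hA, hB]
  · simp [Fin.forall_fin_two, hAt, hBt]
  · rw [measurePrepare_apply, Fin.sum_univ_two, hPN]
    simp [hEX, hFX, ← hAB, sub_eq_add_neg]
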